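/- arXiv:1912.04680 — 9 statements merged into one kernel-verified Lean document; each statement's English description precedes it below -/
import Mathlib

section
/- Suppose P0, P1 : ℕ → ℝ satisfy the steady-state CME of the generalized ON-OFF model with rate functions K1, K2, K3 : ℕ → ℝ, and set P(n) = P0(n) + P1(n). Then for every n ≥ 0, (n+1)·P(n+1) = K3(n)·P1(n). -/
/-!
Adding the two balance equations cancels the switching terms `K1 n * P0 n` and `K2 n * P1 n`.
What remains is the balance equation of a birth–death chain on the total distribution `P0 + P1`:
the net flux `(n+1) P(n+1) - K3 n P1 n` across the edge `n ↔ n+1` equals the flux across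
`n-1 ↔ n`, and there is no flux into state `0` from below. Hence every such flux vanishes.
-/

structure IsOnOffSteadyState (K1 K2 K3 P0 P1 : ℕ → ℝ) : Prop where
  balance_off : ∀ n : ℕ,
    -K1 n * P0 n + K2 n * P1 n + ((n : ℝ) + 1) * P0 (n + 1) - (n : ℝ) * P0 n = 0
  balance_on : ∀ n : ℕ,
    K1 n * P0 n - K2 n * P1 n + (if n = 0 then 0 else K3 (n - 1) * P1 (n - 1))
      - K3 n * P1 n + ((n : ℝ) + 1) * P1 (n + 1) - (n : ℝ) * P1 n = 0

/-- Net probability flux from `n + 1` down to `n`: degradation out of `n + 1` in either state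
minus production out of `n` in the ON state. -/
def onOffFlux (K3 P0 P1 : ℕ → ℝ) (n : ℕ) : ℝ :=
  ((n : ℝ) + 1) * (P0 (n + 1) + P1 (n + 1)) - K3 n * P1 n

namespace IsOnOffSteadyState

variable {K1 K2 K3 P0 P1 : ℕ → ℝ}

theorem onOffFlux_zero (h : IsOnOffSteadyState K1 K2 K3 P0 P1) : onOffFlux K3 P0 P1 0 = 0 := by
  have h0 := h.balance_off 0
  have h1 := h.balance_on 0
  simp only [if_true, Nat.cast_zero, zero_add, zero_mul] at h0 h1
  unfold onOffFlux
  norm_num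
  linarith

theorem onOffFlux_succ (h : IsOnOffSteadyState K1 K2 K3 P0 P1) (n : ℕ) :
    onOffFlux K3 P0 P1 (n + 1) = onOffFlux K3 P0 P1 n := by
  have h0 := h.balance_off (n + 1)
  have h1 := h.balance_on (n + 1)
  simp only [Nat.succ_ne_zero, if_false, Nat.add_sub_cancel] at h1
  unfold onOffFlux
  push_cast at h0 h1 ⊢
  linarith

theorem onOffFlux_eq_zero (h : IsOnOffSteadyState K1 K2 K3 P0 P1) (n : ℕ) :
    onOffFlux K3 P0 P1 n = 0 := by
  induction n with
  | zero => exact h.onOffFlux_zero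
  | succ n ih => rw [h.onOffFlux_succ, ih]

end IsOnOffSteadyState

/-- For solutions of the steady-state CME of the generalized ON-OFF model,
`(n+1)·P(n+1) = K3(n)·P1(n)` for all `n ≥ 0`, where `P = P0 + P1`. -/
theorem cme_flux_relation (K1 K2 K3 P0 P1 P : ℕ → ℝ)
    (hCME0 : ∀ n : ℕ,
      -K1 n * P0 n + K2 n * P1 n + ((n : ℝ) + 1) * P0 (n + 1) - (n : ℝ) * P0 n = 0)
    (hCME1 : ∀ n : ℕ,
      K1 n * P0 n - K2 n * P1 n + (if n = 0 then 0 else K3 (n - 1) * P1 (n - 1))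
        - K3 n * P1 n + ((n : ℝ) + 1) * P1 (n + 1) - (n : ℝ) * P1 n = 0)
    (hP : ∀ n : ℕ, P n = P0 n + P1 n) :
    ∀ n : ℕ, ((n : ℝ) + 1) * P (n + 1) = K3 n * P1 n := by
  intro n
  have hflux := (IsOnOffSteadyState.mk hCME0 hCME1).onOffFlux_eq_zero n
  rw [onOffFlux] at hflux
  rw [hP]
  linarith
end

section
/- Suppose P0, P1 : ℕ → ℝ satisfy the steady-state CME of the generalized ON-OFF model with rate functions K1, K2, K3 : ℕ → ℝ, and set P(n) = P0(n) + P1(n). Then for every n ≥ 1, P0(n) = (1/n!)·P0(0)·∏_{i=0}^{n−1}(i + K1(i) + K2(i)) − Σ_{i=0}^{n−2} [K2(i)/(i+1)]·P(i)·∏_{j=i+1}^{n−1} (j + K1(j) + K2(j))/(j+1) − [K2(n−1)/n]·P(n−1). -/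
/-!
Since `P = P0 + P1`, the first CME equation is a first-order linear recurrence for `P0` alone,
`(n + 1) P0(n + 1) = (n + K1 n + K2 n) P0(n) - K2(n) P(n)`, with `P` as a source term.
The formula is the explicit solution of that recurrence by variation of constants; the
denominators `∏_{i<n} (i + 1)` collapse to `n!`.
-/

open Finset

theorem eq_prod_sub_sum_of_succ_eq {R : Type*} [CommRing R] {x c d : ℕ → R}
    (h : ∀ n, x (n + 1) = c n * x n - d n) (n : ℕ) :
    x n = x 0 * ∏ i ∈ range n, c i - ∑ i ∈ range n, d i * ∏ j ∈ Ico (i + 1) n, c j := by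
  induction n with
  | zero => simp
  | succ n ih =>
    have hsum : ∑ i ∈ range n, d i * ∏ j ∈ Ico (i + 1) (n + 1), c j
        = (∑ i ∈ range n, d i * ∏ j ∈ Ico (i + 1) n, c j) * c n := by
      rw [sum_mul]
      refine sum_congr rfl fun i hi => ?_
      rw [prod_Ico_succ_top (mem_range.mp hi), mul_assoc]
    rw [h, ih, prod_range_succ, sum_range_succ, hsum, Ico_self, prod_empty]
    ring

theorem prod_range_div_add_one {K : Type*} [Field K] (f : ℕ → K) (n : ℕ) :
    ∏ i ∈ range n, f i / ((i : K) + 1) = (∏ i ∈ range n, f i) / n.factorial := by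
  rw [prod_div_distrib, ← prod_range_add_one_eq_factorial]
  push_cast
  rfl

theorem cme_P0_succ {K1 K2 P0 P1 P : ℕ → ℝ}
    (hCME0 : ∀ n : ℕ,
      -K1 n * P0 n + K2 n * P1 n + ((n : ℝ) + 1) * P0 (n + 1) - (n : ℝ) * P0 n = 0)
    (hP : ∀ n : ℕ, P n = P0 n + P1 n) (n : ℕ) :
    P0 (n + 1) = ((n : ℝ) + K1 n + K2 n) / ((n : ℝ) + 1) * P0 n - K2 n / ((n : ℝ) + 1) * P n := by
  field_simp
  linear_combination hCME0 n + K2 n * hP n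

theorem cme_P0_formula_general (K1 K2 P0 P1 P : ℕ → ℝ)
    (hCME0 : ∀ n : ℕ,
      -K1 n * P0 n + K2 n * P1 n + ((n : ℝ) + 1) * P0 (n + 1) - (n : ℝ) * P0 n = 0)
    (hP : ∀ n : ℕ, P n = P0 n + P1 n) :
    ∀ n : ℕ, 1 ≤ n →
      P0 n = (1 / (n.factorial : ℝ)) * P0 0 * ∏ i ∈ Finset.range n, ((i : ℝ) + K1 i + K2 i)
        - ∑ i ∈ Finset.range (n - 1), (K2 i / ((i : ℝ) + 1)) * P i *
            ∏ j ∈ Finset.Icc (i + 1) (n - 1), (((j : ℝ) + K1 j + K2 j) / ((j : ℝ) + 1))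
        - (K2 (n - 1) / (n : ℝ)) * P (n - 1) := by
  intro n hn
  obtain ⟨m, rfl⟩ := Nat.exists_eq_add_of_le' hn
  rw [eq_prod_sub_sum_of_succ_eq (cme_P0_succ hCME0 hP) (m + 1), prod_range_div_add_one,
    sum_range_succ, Ico_self, prod_empty]
  simp only [Nat.add_sub_cancel, Ico_add_one_right_eq_Icc]
  push_cast
  ring

/-- Formula (7) of the paper: for solutions of the steady-state CME of the
generalized ON-OFF model, for every `n ≥ 1`,
`P0(n) = (1/n!)·P0(0)·∏_{i=0}^{n−1}(i + K1(i) + K2(i))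
  − Σ_{i=0}^{n−2} [K2(i)/(i+1)]·P(i)·∏_{j=i+1}^{n−1}(j + K1(j) + K2(j))/(j+1)
  − [K2(n−1)/n]·P(n−1)`. -/
theorem cme_P0_formula (K1 K2 K3 P0 P1 P : ℕ → ℝ)
    (hCME0 : ∀ n : ℕ,
      -K1 n * P0 n + K2 n * P1 n + ((n : ℝ) + 1) * P0 (n + 1) - (n : ℝ) * P0 n = 0)
    (hCME1 : ∀ n : ℕ,
      K1 n * P0 n - K2 n * P1 n + (if n = 0 then 0 else K3 (n - 1) * P1 (n - 1))
        - K3 n * P1 n + ((n : ℝ) + 1) * P1 (n + 1) - (n : ℝ) * P1 n = 0)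
    (hP : ∀ n : ℕ, P n = P0 n + P1 n) :
    ∀ n : ℕ, 1 ≤ n →
      P0 n = (1 / (n.factorial : ℝ)) * P0 0 * ∏ i ∈ Finset.range n, ((i : ℝ) + K1 i + K2 i)
        - ∑ i ∈ Finset.range (n - 1), (K2 i / ((i : ℝ) + 1)) * P i *
            ∏ j ∈ Finset.Icc (i + 1) (n - 1), (((j : ℝ) + K1 j + K2 j) / ((j : ℝ) + 1))
        - (K2 (n - 1) / (n : ℝ)) * P (n - 1) :=
  cme_P0_formula_general K1 K2 P0 P1 P hCME0 hP
end

section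
/- Suppose P0, P1 : ℕ → ℝ satisfy the steady-state CME of the generalized ON-OFF model with rate functions K1, K2, K3 : ℕ → ℝ, and set P(n) = P0(n) + P1(n). Then for every n ≥ 1, P(n+1) = [K3(n)/(n+1)]·P(n) + [K3(n)/(n+1)]·Σ_{i=0}^{n−1} [K2(i)/(i+1)]·P(i)·∏_{j=i+1}^{n−1} (j + K1(j) + K2(j))/(j+1) − [K3(n)/(n+1)!]·P0(0)·∏_{i=0}^{n−1}(i + K1(i) + K2(i)). -/
/-!
Adding the two balance equations telescopes: `(n+1)·P(n+1) − K3(n)·P1(n)` is the same for every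
`n` and vanishes at `n = 0`, so `(n+1)·P(n+1) = K3(n)·P1(n)`. The first equation alone is a
first-order linear recurrence for `P0` with inhomogeneity `−K2(n)·P(n)/(n+1)`. Variation of
constants solves it in closed form, and substituting `P1(n) = P(n) − P0(n)` gives the formula.
-/

open Finset

theorem eq_prod_mul_add_sum_of_recurrence {R : Type*} [CommSemiring R] {x a b : ℕ → R}
    (h : ∀ m, x (m + 1) = a m * x m + b m) (n : ℕ) :
    x n = (∏ i ∈ range n, a i) * x 0 + ∑ i ∈ range n, b i * ∏ j ∈ Ico (i + 1) n, a j := by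
  induction n with
  | zero => simp
  | succ n ih =>
    have hprod : ∀ i ∈ range n, b i * ∏ j ∈ Ico (i + 1) (n + 1), a j
        = a n * (b i * ∏ j ∈ Ico (i + 1) n, a j) := fun i hi => by
      rw [prod_Ico_succ_top (by simpa using hi)]; ring
    rw [h, ih, prod_range_succ, sum_range_succ, sum_congr rfl hprod, ← mul_sum, Ico_self,
      prod_empty]
    ring

section CME

variable {K1 K2 K3 P0 P1 : ℕ → ℝ}

theorem cme_flux_balance
    (hCME0 : ∀ n : ℕ,
      -K1 n * P0 n + K2 n * P1 n + ((n : ℝ) + 1) * P0 (n + 1) - (n : ℝ) * P0 n = 0)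
    (hCME1 : ∀ n : ℕ,
      K1 n * P0 n - K2 n * P1 n + (if n = 0 then 0 else K3 (n - 1) * P1 (n - 1))
        - K3 n * P1 n + ((n : ℝ) + 1) * P1 (n + 1) - (n : ℝ) * P1 n = 0) (n : ℕ) :
    ((n : ℝ) + 1) * (P0 (n + 1) + P1 (n + 1)) = K3 n * P1 n := by
  induction n with
  | zero =>
    have h0 := hCME0 0
    have h1 := hCME1 0
    simp only [if_true, CharP.cast_eq_zero] at h0 h1
    linear_combination h0 + h1
  | succ n ih =>
    have h0 := hCME0 (n + 1)
    have h1 := hCME1 (n + 1)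
    simp only [Nat.add_one_ne_zero, if_false, Nat.add_sub_cancel] at h1
    push_cast at h0 h1 ⊢
    linear_combination h0 + h1 + ih

theorem cme_P0_eq
    (hCME0 : ∀ n : ℕ,
      -K1 n * P0 n + K2 n * P1 n + ((n : ℝ) + 1) * P0 (n + 1) - (n : ℝ) * P0 n = 0) (n : ℕ) :
    P0 n = P0 0 * (∏ i ∈ range n, ((i : ℝ) + K1 i + K2 i)) / n.factorial
      - ∑ i ∈ range n, K2 i / ((i : ℝ) + 1) * (P0 i + P1 i) *
          ∏ j ∈ Ico (i + 1) n, ((j : ℝ) + K1 j + K2 j) / ((j : ℝ) + 1) := by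
  have hrec : ∀ m, P0 (m + 1) = ((m : ℝ) + K1 m + K2 m) / ((m : ℝ) + 1) * P0 m
      + -(K2 m / ((m : ℝ) + 1) * (P0 m + P1 m)) := fun m => by
    field_simp
    linear_combination hCME0 m
  rw [eq_prod_mul_add_sum_of_recurrence hrec n, prod_div_distrib,
    Nat.factorial_eq_prod_range_add_one]
  push_cast
  simp only [neg_mul, sum_neg_distrib]
  ring

end CME

/-- Formula (8) of the paper: for solutions of the steady-state CME of the
generalized ON-OFF model, for every `n ≥ 1`,
`P(n+1) = [K3(n)/(n+1)]·P(n)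
  + [K3(n)/(n+1)]·Σ_{i=0}^{n−1} [K2(i)/(i+1)]·P(i)·∏_{j=i+1}^{n−1}(j+K1(j)+K2(j))/(j+1)
  − [K3(n)/(n+1)!]·P0(0)·∏_{i=0}^{n−1}(i+K1(i)+K2(i))`. -/
theorem cme_P_iteration (K1 K2 K3 P0 P1 P : ℕ → ℝ)
    (hCME0 : ∀ n : ℕ,
      -K1 n * P0 n + K2 n * P1 n + ((n : ℝ) + 1) * P0 (n + 1) - (n : ℝ) * P0 n = 0)
    (hCME1 : ∀ n : ℕ,
      K1 n * P0 n - K2 n * P1 n + (if n = 0 then 0 else K3 (n - 1) * P1 (n - 1))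
        - K3 n * P1 n + ((n : ℝ) + 1) * P1 (n + 1) - (n : ℝ) * P1 n = 0)
    (hP : ∀ n : ℕ, P n = P0 n + P1 n) :
    ∀ n : ℕ, 1 ≤ n →
      P (n + 1) = (K3 n / ((n : ℝ) + 1)) * P n
        + (K3 n / ((n : ℝ) + 1)) * ∑ i ∈ Finset.range n, (K2 i / ((i : ℝ) + 1)) * P i *
            ∏ j ∈ Finset.Icc (i + 1) (n - 1), (((j : ℝ) + K1 j + K2 j) / ((j : ℝ) + 1))
        - (K3 n / ((n + 1).factorial : ℝ)) * P0 0 *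
            ∏ i ∈ Finset.range n, ((i : ℝ) + K1 i + K2 i) := by
  intro n hn
  have hIco (i : ℕ) : Icc (i + 1) (n - 1) = Ico (i + 1) n :=
    Icc_sub_one_right_eq_Ico_of_not_isMin (by simpa using Nat.one_le_iff_ne_zero.mp hn) _
  have hflux := cme_flux_balance hCME0 hCME1 n
  have hP0 := cme_P0_eq (P1 := P1) hCME0 n
  simp only [hP, hIco]
  rw [mul_comm, ← eq_div_iff (by positivity), mul_div_right_comm] at hflux
  rw [Nat.factorial_succ, Nat.cast_mul, Nat.cast_succ, ← div_div]
  linear_combination hflux - K3 n / ((n : ℝ) + 1) * hP0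
end

section
/- Suppose P0, P1 : ℕ → ℝ satisfy the steady-state CME of the generalized ON-OFF model with rate functions K1, K2, K3 : ℕ → ℝ, and set P(n) = P0(n) + P1(n). Let (a_n), (b_n), (c_n), (d_n) be the paper's auxiliary sequences associated with K1, K2, K3. Then for every n ≥ 1, P0(n) = (1/n!)·[−c_n·P(0) + d_n·P0(0)]. -/
/-!
Adding the two balance equations makes the flux `(n + 1) P(n + 1) - K3(n) P1(n)` independent
of `n`, and it vanishes at `n = 0`; hence `(n + 1) P(n + 1) = K3(n) (P(n) - P0(n))`. With
`w n = n + K1(n) + K2(n)` the first balance equation reads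
`(n + 1) P0(n + 1) = w n P0(n) - K2(n) P(n)`, so `(n! P0(n), n! P(n))` solves a first-order
linear recurrence. Unwinding the sums in the paper's auxiliary sequences shows that for `n ≥ 1`
`c_{n+1} = w n c_n + K2(n) a_n`, `d_{n+1} = w n d_n + K2(n) b_n`,
`a_{n+1} = K3(n) (a_n + c_n)` and `b_{n+1} = K3(n) (b_n + d_n)`, which are exactly the
coefficient recurrences of `n! P0(n) = -c_n P(0) + d_n P0(0)` and
`n! P(n) = a_n P(0) - b_n P0(0)`.
-/

open Finset

theorem sum_Icc_mul_prod_Icc_succ_top {R : Type*} [CommSemiring R] {k m : ℕ} (hk : k ≤ m + 1)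
    (f w : ℕ → R) :
    ∑ i ∈ Icc k (m + 1), f i * ∏ j ∈ Icc (i + 1) (m + 1), w j
      = (∑ i ∈ Icc k m, f i * ∏ j ∈ Icc (i + 1) m, w j) * w (m + 1) + f (m + 1) := by
  rw [sum_Icc_succ_top hk, Icc_eq_empty (show ¬m + 1 + 1 ≤ m + 1 by omega), prod_empty, mul_one,
    sum_mul]
  congr 1
  refine sum_congr rfl fun i hi => ?_
  rw [prod_Icc_succ_top (by simp only [mem_Icc] at hi; omega), mul_assoc]

theorem succ_eq_of_eq_sum_mul_prod_add {R : Type*} [CommSemiring R] {F f w t : ℕ → R}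
    (hF : ∀ n, 1 ≤ n →
      F n = ∑ i ∈ Icc 1 (n - 1), f i * ∏ j ∈ Icc (i + 1) (n - 1), w j + t n)
    (ht : ∀ n, 1 ≤ n → t (n + 1) = w n * t n) (n : ℕ) (hn : 1 ≤ n) :
    F (n + 1) = w n * F n + f n := by
  obtain ⟨m, rfl⟩ : ∃ m, n = m + 1 := ⟨n - 1, by omega⟩
  rw [hF (m + 1 + 1) (by omega), hF (m + 1) hn, ht (m + 1) hn, Nat.add_sub_cancel,
    Nat.add_sub_cancel, sum_Icc_mul_prod_Icc_succ_top (by omega)]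
  ring

theorem factorial_mul_eq_of_recurrence {R : Type*} [CommRing R] (w k₂ k₃ x y a b c d : ℕ → R)
    (hx : ∀ n : ℕ, ((n : R) + 1) * x (n + 1) = w n * x n - k₂ n * y n)
    (hy : ∀ n : ℕ, ((n : R) + 1) * y (n + 1) = k₃ n * (y n - x n))
    (hc1 : c 1 = k₂ 0) (hd1 : d 1 = w 0) (ha1 : a 1 = k₃ 0) (hb1 : b 1 = k₃ 0)
    (hc : ∀ n, 1 ≤ n → c (n + 1) = w n * c n + k₂ n * a n)
    (hd : ∀ n, 1 ≤ n → d (n + 1) = w n * d n + k₂ n * b n)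
    (ha : ∀ n, 1 ≤ n → a (n + 1) = k₃ n * (a n + c n))
    (hb : ∀ n, 1 ≤ n → b (n + 1) = k₃ n * (b n + d n)) (n : ℕ) (hn : 1 ≤ n) :
    (n.factorial : R) * x n = -c n * y 0 + d n * x 0 ∧
      (n.factorial : R) * y n = a n * y 0 - b n * x 0 := by
  induction n, hn using Nat.le_induction with
  | base =>
    have hx0 := hx 0
    have hy0 := hy 0
    push_cast at hx0 hy0
    rw [hc1, hd1, ha1, hb1, Nat.factorial_one, Nat.cast_one]
    constructor
    · linear_combination hx0
    · linear_combination hy0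
  | succ n hn ih =>
    obtain ⟨ihx, ihy⟩ := ih
    rw [Nat.factorial_succ, Nat.cast_mul, Nat.cast_succ, hc n hn, hd n hn, ha n hn, hb n hn]
    constructor
    · linear_combination (n.factorial : R) * hx n + w n * ihx - k₂ n * ihy
    · linear_combination (n.factorial : R) * hy n + k₃ n * ihy - k₃ n * ihx

theorem cme_succ_mul_total_eq {K1 K2 K3 P0 P1 : ℕ → ℝ}
    (hCME0 : ∀ n : ℕ,
      -K1 n * P0 n + K2 n * P1 n + ((n : ℝ) + 1) * P0 (n + 1) - (n : ℝ) * P0 n = 0)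
    (hCME1 : ∀ n : ℕ,
      K1 n * P0 n - K2 n * P1 n + (if n = 0 then 0 else K3 (n - 1) * P1 (n - 1))
        - K3 n * P1 n + ((n : ℝ) + 1) * P1 (n + 1) - (n : ℝ) * P1 n = 0)
    (n : ℕ) : ((n : ℝ) + 1) * (P0 (n + 1) + P1 (n + 1)) = K3 n * P1 n := by
  induction n with
  | zero =>
    have h1 := hCME1 0
    rw [if_pos rfl] at h1
    linear_combination hCME0 0 + h1
  | succ n ih =>
    have h0 := hCME0 (n + 1)
    have h1 := hCME1 (n + 1)
    rw [if_neg n.succ_ne_zero, Nat.add_sub_cancel] at h1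
    push_cast at h0 h1 ⊢
    linear_combination h0 + h1 + ih

/-- Formula (10) of the paper: for solutions of the steady-state CME of the
generalized ON-OFF model, with the paper's auxiliary sequences `a`, `b`, `c`, `d`,
one has `P0(n) = (1/n!)·[−c_n·P(0) + d_n·P0(0)]` for `n ≥ 1`. -/
theorem cme_P0_formal_expression (K1 K2 K3 P0 P1 P a b c d : ℕ → ℝ)
    (hCME0 : ∀ n : ℕ,
      -K1 n * P0 n + K2 n * P1 n + ((n : ℝ) + 1) * P0 (n + 1) - (n : ℝ) * P0 n = 0)
    (hCME1 : ∀ n : ℕ,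
      K1 n * P0 n - K2 n * P1 n + (if n = 0 then 0 else K3 (n - 1) * P1 (n - 1))
        - K3 n * P1 n + ((n : ℝ) + 1) * P1 (n + 1) - (n : ℝ) * P1 n = 0)
    (hP : ∀ n : ℕ, P n = P0 n + P1 n)
    (ha1 : a 1 = K3 0)
    (haRec : ∀ n : ℕ, 2 ≤ n →
      a n = K3 (n - 1) * a (n - 1)
        + K3 (n - 1) * ∑ i ∈ Finset.Icc 1 (n - 2), K2 i * a i *
            ∏ j ∈ Finset.Icc (i + 1) (n - 2), ((j : ℝ) + K1 j + K2 j)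
        + K3 (n - 1) * K2 0 * ∏ i ∈ Finset.Icc 1 (n - 2), ((i : ℝ) + K1 i + K2 i))
    (hb1 : b 1 = K3 0)
    (hbRec : ∀ n : ℕ, 2 ≤ n →
      b n = K3 (n - 1) * b (n - 1)
        + K3 (n - 1) * ∑ i ∈ Finset.Icc 1 (n - 2), K2 i * b i *
            ∏ j ∈ Finset.Icc (i + 1) (n - 2), ((j : ℝ) + K1 j + K2 j)
        + K3 (n - 1) * ∏ i ∈ Finset.range (n - 1), ((i : ℝ) + K1 i + K2 i))
    (hc : ∀ n : ℕ, 1 ≤ n →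
      c n = ∑ i ∈ Finset.Icc 1 (n - 1), K2 i * a i *
            ∏ j ∈ Finset.Icc (i + 1) (n - 1), ((j : ℝ) + K1 j + K2 j)
        + K2 0 * ∏ i ∈ Finset.Icc 1 (n - 1), ((i : ℝ) + K1 i + K2 i))
    (hd : ∀ n : ℕ, 1 ≤ n →
      d n = ∑ i ∈ Finset.Icc 1 (n - 1), K2 i * b i *
            ∏ j ∈ Finset.Icc (i + 1) (n - 1), ((j : ℝ) + K1 j + K2 j)
        + ∏ i ∈ Finset.range n, ((i : ℝ) + K1 i + K2 i)) :
    ∀ n : ℕ, 1 ≤ n →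
      P0 n = (1 / (n.factorial : ℝ)) * (-(c n) * P 0 + d n * P0 0) := by
  have hP1 : ∀ n, P1 n = P n - P0 n := fun n => by rw [hP]; ring
  have hx : ∀ n : ℕ, ((n : ℝ) + 1) * P0 (n + 1) = (n + K1 n + K2 n) * P0 n - K2 n * P n :=
    fun n => by linear_combination hCME0 n - K2 n * hP1 n
  have hy : ∀ n : ℕ, ((n : ℝ) + 1) * P (n + 1) = K3 n * (P n - P0 n) := fun n => by
    rw [hP, ← hP1]; exact cme_succ_mul_total_eq hCME0 hCME1 n
  have hcRec := succ_eq_of_eq_sum_mul_prod_add hc fun n hn => by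
    obtain ⟨m, rfl⟩ : ∃ m, n = m + 1 := ⟨n - 1, by omega⟩
    simp only [Nat.add_sub_cancel]
    rw [prod_Icc_succ_top (by omega)]; ring
  have hdRec := succ_eq_of_eq_sum_mul_prod_add hd fun n _ => by rw [prod_range_succ, mul_comm]
  have haRec' : ∀ n, 1 ≤ n → a (n + 1) = K3 n * (a n + c n) := fun n hn => by
    rw [haRec (n + 1) (by omega), hc n hn, Nat.add_sub_cancel, show n + 1 - 2 = n - 1 by omega]
    ring
  have hbRec' : ∀ n, 1 ≤ n → b (n + 1) = K3 n * (b n + d n) := fun n hn => by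
    rw [hbRec (n + 1) (by omega), hd n hn, Nat.add_sub_cancel, show n + 1 - 2 = n - 1 by omega]
    ring
  have hc1 : c 1 = K2 0 := by simp [hc 1 le_rfl]
  have hd1 : d 1 = ((0 : ℕ) : ℝ) + K1 0 + K2 0 := by simp [hd 1 le_rfl]
  intro n hn
  rw [one_div_mul_eq_div, eq_div_iff (by positivity), mul_comm]
  exact (factorial_mul_eq_of_recurrence _ K2 K3 P0 P a b c d hx hy hc1 hd1 ha1 hb1
    hcRec hdRec haRec' hbRec' n hn).1
end

section
/- Let K1, K2, K3 : ℕ → ℝ with K3(n) ≠ 0 for all n, and let (b_n) be the paper's auxiliary sequence b associated with K1, K2, K3 (b_1 = K3(0) and the one-step recursion from the paper). Then b_2 = K3(1)·(K3(0) + K2(0) + K1(0)), and for every n ≥ 2, b_{n+1} = [K3(n)·(n − 1 + K1(n−1) + K2(n−1) + K3(n−1))/K3(n−1)]·b_n − K3(n)·(n − 1 + K1(n−1))·b_{n−1}. -/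
/-!
Writing `c j = j + K1 j + K2 j`, the paper's recursion reads `b (m+2) = K3 (m+1) * (b (m+1) + t m)`,
where the tail `t m = ∑_{i=1}^{m} K2 i b i ∏_{j=i+1}^{m} c j + ∏_{i=0}^{m} c i` solves the first-order
recurrence `t (m+1) = c (m+1) * t m + K2 (m+1) * b (m+1)`. Eliminating `t` between two consecutive
instances (dividing by `K3 (n-1)`) gives the three-term recursion.
-/

open Finset

section AffineRecurrence

variable {R : Type*} [CommSemiring R]

def affineRecSolution (c w : ℕ → R) (m : ℕ) : R :=
  ∑ i ∈ Icc 1 m, w i * ∏ j ∈ Icc (i + 1) m, c j + ∏ i ∈ range (m + 1), c i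

theorem affineRecSolution_zero (c w : ℕ → R) : affineRecSolution c w 0 = c 0 := by
  simp [affineRecSolution]

theorem affineRecSolution_succ (c w : ℕ → R) (m : ℕ) :
    affineRecSolution c w (m + 1) = c (m + 1) * affineRecSolution c w m + w (m + 1) := by
  have hprod (i : ℕ) (hi : i ∈ Icc 1 m) :
      w i * ∏ j ∈ Icc (i + 1) (m + 1), c j = (w i * ∏ j ∈ Icc (i + 1) m, c j) * c (m + 1) := by
    rw [prod_Icc_succ_top (by grind), mul_assoc]
  rw [affineRecSolution, affineRecSolution, sum_Icc_succ_top (by omega), sum_congr rfl hprod,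
    ← sum_mul, Icc_eq_empty_of_lt (Nat.lt_succ_self _), prod_empty, prod_range_succ]
  ring

end AffineRecurrence

/-- Simplification of the recursion for the paper's auxiliary sequence `b`:
`b_2 = K3(1)(K3(0)+K2(0)+K1(0))` and, for `n ≥ 2`,
`b_{n+1} = [K3(n)(n−1+K1(n−1)+K2(n−1)+K3(n−1))/K3(n−1)]·b_n − K3(n)(n−1+K1(n−1))·b_{n−1}`. -/
theorem aux_b_three_term_recursion (K1 K2 K3 b : ℕ → ℝ)
    (hK3 : ∀ n : ℕ, K3 n ≠ 0)
    (hb1 : b 1 = K3 0)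
    (hbRec : ∀ n : ℕ, 2 ≤ n →
      b n = K3 (n - 1) * b (n - 1)
        + K3 (n - 1) * ∑ i ∈ Finset.Icc 1 (n - 2), K2 i * b i *
            ∏ j ∈ Finset.Icc (i + 1) (n - 2), ((j : ℝ) + K1 j + K2 j)
        + K3 (n - 1) * ∏ i ∈ Finset.range (n - 1), ((i : ℝ) + K1 i + K2 i)) :
    b 2 = K3 1 * (K3 0 + K2 0 + K1 0)
    ∧ ∀ n : ℕ, 2 ≤ n →
      b (n + 1) = K3 n * ((n : ℝ) - 1 + K1 (n - 1) + K2 (n - 1) + K3 (n - 1)) / K3 (n - 1) * b n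
        - K3 n * ((n : ℝ) - 1 + K1 (n - 1)) * b (n - 1) := by
  have hb (m : ℕ) : b (m + 2) = K3 (m + 1) * (b (m + 1) +
      affineRecSolution (fun j : ℕ => (j : ℝ) + K1 j + K2 j) (fun i => K2 i * b i) m) := by
    rw [hbRec (m + 2) le_add_self, affineRecSolution, Nat.add_sub_cancel,
      show m + 2 - 1 = m + 1 from rfl]
    ring
  refine ⟨?_, fun n hn => ?_⟩
  · rw [hb 0, hb1, affineRecSolution_zero]
    push_cast
    ring
  · obtain ⟨m, rfl⟩ := Nat.exists_eq_add_of_le' hn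
    have hbm1 := hb (m + 1)
    rw [affineRecSolution_succ] at hbm1
    have hK := hK3 (m + 1)
    rw [show m + 2 - 1 = m + 1 from rfl]
    push_cast at hbm1 ⊢
    field_simp
    linear_combination K3 (m + 1) * hbm1
      - K3 (m + 2) * ((m : ℝ) + 1 + K1 (m + 1) + K2 (m + 1)) * hb m
end

section
/- Let K1, K2, K3 : ℕ → ℝ with Ki(n) > 0 for all i ∈ {1,2,3} and all n, and let (a_n) be the paper's auxiliary sequence a associated with K1, K2, K3. Then for every n ≥ 2, a_n − [(n − 1 + K1(n−1))/(n − 1 + K1(n−1) + K2(n−1))]·K3(n−1)·a_{n−1} > 0. -/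
/-!
Factor `K3 (n-1)` out of the recursion: `a n = K3 (n-1) * (a (n-1) + t n)`, where the tail `t n`
collects the sum and the `K2 0` term. With positive rates every factor of `t n` is nonnegative and
its last summand is positive, so by strong induction `a` is positive and then
`a n - c * K3 (n-1) * a (n-1) = K3 (n-1) * ((1 - c) * a (n-1) + t n) > 0` for the ratio `c < 1`.
-/

open Finset

namespace AuxSeq

variable {K1 K2 K3 a : ℕ → ℝ}

noncomputable def tail (K1 K2 a : ℕ → ℝ) (n : ℕ) : ℝ :=
  ∑ i ∈ Icc 1 (n - 2), K2 i * a i * ∏ j ∈ Icc (i + 1) (n - 2), ((j : ℝ) + K1 j + K2 j)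
    + K2 0 * ∏ i ∈ Icc 1 (n - 2), ((i : ℝ) + K1 i + K2 i)

lemma prod_rate_pos (hK1 : ∀ n, 0 < K1 n) (hK2 : ∀ n, 0 < K2 n) (s : Finset ℕ) :
    0 < ∏ j ∈ s, ((j : ℝ) + K1 j + K2 j) :=
  prod_pos fun j _ ↦ by have := hK1 j; have := hK2 j; positivity

lemma tail_pos (hK1 : ∀ n, 0 < K1 n) (hK2 : ∀ n, 0 < K2 n) {n : ℕ}
    (ha : ∀ i ∈ Icc 1 (n - 2), 0 ≤ a i) : 0 < tail K1 K2 a n := by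
  have hsum : 0 ≤ ∑ i ∈ Icc 1 (n - 2),
      K2 i * a i * ∏ j ∈ Icc (i + 1) (n - 2), ((j : ℝ) + K1 j + K2 j) :=
    sum_nonneg fun i hi ↦
      mul_nonneg (mul_nonneg (hK2 i).le (ha i hi)) (prod_rate_pos hK1 hK2 _).le
  exact add_pos_of_nonneg_of_pos hsum (mul_pos (hK2 0) (prod_rate_pos hK1 hK2 _))

lemma eq_mul_add_tail {n : ℕ}
    (haRec : a n = K3 (n - 1) * a (n - 1)
        + K3 (n - 1) * ∑ i ∈ Icc 1 (n - 2), K2 i * a i *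
            ∏ j ∈ Icc (i + 1) (n - 2), ((j : ℝ) + K1 j + K2 j)
        + K3 (n - 1) * K2 0 * ∏ i ∈ Icc 1 (n - 2), ((i : ℝ) + K1 i + K2 i)) :
    a n = K3 (n - 1) * (a (n - 1) + tail K1 K2 a n) := by
  rw [haRec, tail]
  ring

lemma pos_of_eq_mul_add_tail (hK1 : ∀ n, 0 < K1 n) (hK2 : ∀ n, 0 < K2 n)
    (hK3 : ∀ n, 0 < K3 n) (ha1 : a 1 = K3 0)
    (haRec : ∀ n, 2 ≤ n → a n = K3 (n - 1) * (a (n - 1) + tail K1 K2 a n)) :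
    ∀ n, 1 ≤ n → 0 < a n := by
  intro n
  induction n using Nat.strong_induction_on with
  | _ n ih =>
    intro hn
    obtain rfl | h2 := hn.eq_or_lt
    · exact ha1 ▸ hK3 0
    · have hprev : 0 < a (n - 1) := ih (n - 1) (by omega) (by omega)
      have htail : 0 < tail K1 K2 a n :=
        tail_pos hK1 hK2 fun i hi ↦
          have hi' := mem_Icc.mp hi
          (ih i (by omega) hi'.1).le
      rw [haRec n h2]
      exact mul_pos (hK3 _) (add_pos hprev htail)

lemma rate_ratio_lt_one (hK1 : ∀ n, 0 < K1 n) (hK2 : ∀ n, 0 < K2 n) {n : ℕ} (hn : 1 ≤ n) :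
    ((n : ℝ) - 1 + K1 (n - 1)) / ((n : ℝ) - 1 + K1 (n - 1) + K2 (n - 1)) < 1 := by
  have hn' : (1 : ℝ) ≤ n := by exact_mod_cast hn
  have := hK1 (n - 1)
  have := hK2 (n - 1)
  rw [div_lt_one (by linarith)]
  linarith

end AuxSeq

open AuxSeq in
/-- Inequality (A4) of the paper: for positive rates, for every `n ≥ 2`,
`a_n − [(n−1+K1(n−1))/(n−1+K1(n−1)+K2(n−1))]·K3(n−1)·a_{n−1} > 0`. -/
theorem aux_a_gap_pos (K1 K2 K3 a : ℕ → ℝ)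
    (hK1 : ∀ n : ℕ, 0 < K1 n) (hK2 : ∀ n : ℕ, 0 < K2 n) (hK3 : ∀ n : ℕ, 0 < K3 n)
    (ha1 : a 1 = K3 0)
    (haRec : ∀ n : ℕ, 2 ≤ n →
      a n = K3 (n - 1) * a (n - 1)
        + K3 (n - 1) * ∑ i ∈ Finset.Icc 1 (n - 2), K2 i * a i *
            ∏ j ∈ Finset.Icc (i + 1) (n - 2), ((j : ℝ) + K1 j + K2 j)
        + K3 (n - 1) * K2 0 * ∏ i ∈ Finset.Icc 1 (n - 2), ((i : ℝ) + K1 i + K2 i)) :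
    ∀ n : ℕ, 2 ≤ n →
      0 < a n - (((n : ℝ) - 1 + K1 (n - 1)) / ((n : ℝ) - 1 + K1 (n - 1) + K2 (n - 1)))
        * K3 (n - 1) * a (n - 1) := by
  have haTail : ∀ n, 2 ≤ n → a n = K3 (n - 1) * (a (n - 1) + tail K1 K2 a n) :=
    fun n hn ↦ eq_mul_add_tail (haRec n hn)
  have hpos := pos_of_eq_mul_add_tail hK1 hK2 hK3 ha1 haTail
  intro n hn
  set c := ((n : ℝ) - 1 + K1 (n - 1)) / ((n : ℝ) - 1 + K1 (n - 1) + K2 (n - 1))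
  have hc : c < 1 := rate_ratio_lt_one hK1 hK2 (by omega)
  have hprev : 0 < a (n - 1) := hpos (n - 1) (by omega)
  have htail : 0 < tail K1 K2 a n :=
    tail_pos hK1 hK2 fun i hi ↦ (hpos i (mem_Icc.mp hi).1).le
  have hgap : a n - c * K3 (n - 1) * a (n - 1)
      = K3 (n - 1) * ((1 - c) * a (n - 1) + tail K1 K2 a n) := by
    rw [haTail n hn]
    ring
  rw [hgap]
  exact mul_pos (hK3 _) (add_pos (mul_pos (sub_pos.mpr hc) hprev) htail)
end

section
/- Let K1, K2, K3 : ℕ → ℝ with Ki(n) > 0 for all i ∈ {1,2,3} and all n, and let (a_n) be the paper's auxiliary sequence a associated with K1, K2, K3. Then for every n ≥ 2, a_{n+1} > (∏_{i=2}^{n} K3(i)) · { a_2 + (a_2 − K3(1)·a_1) · Σ_{i=2}^{n} ∏_{k=2}^{i} (k − 1 + K1(k−1) + K2(k−1))/K3(k−1) }. -/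
/-!
Write `c_j = j + K1 j + K2 j` and `T_m` for the bracket in the recurrence, so that
`a_{m+2} = K3(m+1) (a_{m+1} + T_m)`, `T_0 = K2 0` and `T_{m+1} = c_{m+1} T_m + K2(m+1) a_{m+1}`.
By induction all `a_n` and `T_m` are positive, hence `T_m > K2 0 ∏_{j=1}^m c_j` for `m ≥ 1`,
while `a_2 − K3(1) a_1 = K3(1) K2(0)`. Unrolling the first-order recurrence for `a_{n+1}`
against this lower bound for its inhomogeneous term gives the inequality.
-/

open Finset

section LinearRecurrence

variable {R : Type*} [CommSemiring R] [PartialOrder R] [IsStrictOrderedRing R]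

theorem prod_Ioc_mul_add_sum_lt_of_eq_mul_add {x b t s : ℕ → R} {m : ℕ}
    (hb : ∀ n, 0 < b n) (hx : ∀ n, x (n + 1) = b (n + 1) * (x n + t n))
    (ht : ∀ n, m ≤ n → (∏ k ∈ Ioc m n, b k) * s (n + 1) < t n) {n : ℕ} (hn : m < n) :
    (∏ k ∈ Ioc m n, b k) * (x m + ∑ i ∈ Ioc m n, s i) < x n := by
  have step : ∀ n, m ≤ n → (∏ k ∈ Ioc m n, b k) * (x m + ∑ i ∈ Ioc m n, s i) ≤ x n →
      (∏ k ∈ Ioc m (n + 1), b k) * (x m + ∑ i ∈ Ioc m (n + 1), s i) < x (n + 1) := by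
    intro n hmn ih
    calc (∏ k ∈ Ioc m (n + 1), b k) * (x m + ∑ i ∈ Ioc m (n + 1), s i)
        = b (n + 1) * ((∏ k ∈ Ioc m n, b k) * (x m + ∑ i ∈ Ioc m n, s i)
            + (∏ k ∈ Ioc m n, b k) * s (n + 1)) := by
          rw [prod_Ioc_succ_top hmn, sum_Ioc_succ_top hmn]; ring
      _ < b (n + 1) * (x n + t n) :=
          mul_lt_mul_of_pos_left (add_lt_add_of_le_of_lt ih (ht n hmn)) (hb _)
      _ = x (n + 1) := (hx n).symm
  have hle : ∀ n, m ≤ n → (∏ k ∈ Ioc m n, b k) * (x m + ∑ i ∈ Ioc m n, s i) ≤ x n := by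
    intro n hmn
    induction n, hmn using Nat.le_induction with
    | base => simp
    | succ n hmn ih => exact (step n hmn ih).le
  obtain ⟨n, rfl⟩ : ∃ k, n = k + 1 := ⟨n - 1, by omega⟩
  exact step n (by omega) (hle n (by omega))

end LinearRecurrence

section AuxSequence

variable {K1 K2 K3 a : ℕ → ℝ}

def growthFactor (K1 K2 : ℕ → ℝ) (j : ℕ) : ℝ := j + K1 j + K2 j

/-- The bracket of the recurrence: `a (m + 2) = K3 (m + 1) * (a (m + 1) + auxTail K1 K2 a m)`. -/
def auxTail (K1 K2 a : ℕ → ℝ) (m : ℕ) : ℝ :=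
  ∑ i ∈ Icc 1 m, K2 i * a i * ∏ j ∈ Icc (i + 1) m, growthFactor K1 K2 j
    + K2 0 * ∏ i ∈ Icc 1 m, growthFactor K1 K2 i

theorem growthFactor_pos {j : ℕ} (h1 : 0 ≤ K1 j) (h2 : 0 < K2 j) : 0 < growthFactor K1 K2 j := by
  unfold growthFactor
  positivity

theorem auxTail_zero : auxTail K1 K2 a 0 = K2 0 := by
  simp [auxTail]

theorem auxTail_succ (m : ℕ) :
    auxTail K1 K2 a (m + 1) =
      growthFactor K1 K2 (m + 1) * auxTail K1 K2 a m + K2 (m + 1) * a (m + 1) := by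
  have hsum : ∑ i ∈ Icc 1 m, K2 i * a i * ∏ j ∈ Icc (i + 1) (m + 1), growthFactor K1 K2 j
      = growthFactor K1 K2 (m + 1) *
          ∑ i ∈ Icc 1 m, K2 i * a i * ∏ j ∈ Icc (i + 1) m, growthFactor K1 K2 j := by
    rw [mul_sum]
    refine sum_congr rfl fun i hi => ?_
    rw [prod_Icc_succ_top (by grind)]
    ring
  rw [auxTail, auxTail, sum_Icc_succ_top (by omega), hsum, Icc_eq_empty_of_lt (Nat.lt_succ_self _),
    prod_empty, prod_Icc_succ_top (by omega : 1 ≤ m + 1)]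
  ring

theorem pos_and_auxTail_pos (hK1 : ∀ n, 0 ≤ K1 n) (hK2 : ∀ n, 0 < K2 n) (hK3 : ∀ n, 0 < K3 n)
    (ha1 : 0 < a 1) (hrec : ∀ m, a (m + 2) = K3 (m + 1) * (a (m + 1) + auxTail K1 K2 a m))
    (m : ℕ) : 0 < a (m + 1) ∧ 0 < auxTail K1 K2 a m := by
  induction m with
  | zero => exact ⟨ha1, auxTail_zero (a := a) ▸ hK2 0⟩
  | succ m ih =>
    refine ⟨hrec m ▸ mul_pos (hK3 _) (add_pos ih.1 ih.2), ?_⟩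
    rw [auxTail_succ]
    exact add_pos (mul_pos (growthFactor_pos (hK1 _) (hK2 _)) ih.2) (mul_pos (hK2 _) ih.1)

theorem mul_prod_growthFactor_lt_auxTail (hK1 : ∀ n, 0 ≤ K1 n) (hK2 : ∀ n, 0 < K2 n)
    (ha : ∀ i, 0 < a (i + 1)) {m : ℕ} (hm : 1 ≤ m) :
    K2 0 * ∏ i ∈ Icc 1 m, growthFactor K1 K2 i < auxTail K1 K2 a m := by
  refine lt_add_of_pos_left _ (sum_pos (fun i hi => ?_) (nonempty_Icc.mpr hm))
  obtain ⟨j, rfl⟩ : ∃ j, i = j + 1 := ⟨i - 1, by grind⟩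
  exact mul_pos (mul_pos (hK2 _) (ha j)) (prod_pos fun j _ => growthFactor_pos (hK1 j) (hK2 j))

theorem mul_prod_mul_prod_div_eq_prod_growthFactor (hK3 : ∀ n, K3 n ≠ 0) {n : ℕ} (hn : 1 ≤ n) :
    K3 1 * (∏ k ∈ Ioc 1 n, K3 k) *
        ∏ k ∈ Icc 2 (n + 1), (((k : ℝ) - 1 + K1 (k - 1) + K2 (k - 1)) / K3 (k - 1))
      = ∏ j ∈ Icc 1 n, growthFactor K1 K2 j := by
  induction n, hn using Nat.le_induction with
  | base =>
    norm_num [growthFactor, mul_div_cancel₀ _ (hK3 1)]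
  | succ n hn ih =>
    rw [prod_Ioc_succ_top hn, prod_Icc_succ_top (b := n + 1) (by omega),
      prod_Icc_succ_top (a := 1) (b := n) (by omega), ← ih, Nat.add_sub_cancel, growthFactor]
    field_simp [hK3 (n + 1)]
    push_cast
    ring

end AuxSequence

/-- Inequality (A7) of the paper: for positive rates, for every `n ≥ 2`,
`a_{n+1} > (∏_{i=2}^n K3(i))·{a_2 + (a_2 − K3(1)a_1)·Σ_{i=2}^n ∏_{k=2}^i (k−1+K1(k−1)+K2(k−1))/K3(k−1)}`. -/
theorem aux_a_lower_bound (K1 K2 K3 a : ℕ → ℝ)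
    (hK1 : ∀ n : ℕ, 0 < K1 n) (hK2 : ∀ n : ℕ, 0 < K2 n) (hK3 : ∀ n : ℕ, 0 < K3 n)
    (ha1 : a 1 = K3 0)
    (haRec : ∀ n : ℕ, 2 ≤ n →
      a n = K3 (n - 1) * a (n - 1)
        + K3 (n - 1) * ∑ i ∈ Finset.Icc 1 (n - 2), K2 i * a i *
            ∏ j ∈ Finset.Icc (i + 1) (n - 2), ((j : ℝ) + K1 j + K2 j)
        + K3 (n - 1) * K2 0 * ∏ i ∈ Finset.Icc 1 (n - 2), ((i : ℝ) + K1 i + K2 i)) :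
    ∀ n : ℕ, 2 ≤ n →
      (∏ i ∈ Finset.Icc 2 n, K3 i) *
        (a 2 + (a 2 - K3 1 * a 1) * ∑ i ∈ Finset.Icc 2 n,
          ∏ k ∈ Finset.Icc 2 i, (((k : ℝ) - 1 + K1 (k - 1) + K2 (k - 1)) / K3 (k - 1)))
      < a (n + 1) := by
  have hrec : ∀ m, a (m + 2) = K3 (m + 1) * (a (m + 1) + auxTail K1 K2 a m) := by
    intro m
    rw [haRec (m + 2) (by omega), show m + 2 - 1 = m + 1 by omega, Nat.add_sub_cancel, auxTail]
    simp only [growthFactor]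
    ring
  have hK1' : ∀ n, 0 ≤ K1 n := fun n => (hK1 n).le
  have hpos := pos_and_auxTail_pos hK1' hK2 hK3 (ha1 ▸ hK3 0) hrec
  have hd : a 2 - K3 1 * a 1 = K3 1 * K2 0 := by
    rw [hrec 0, auxTail_zero]
    ring
  intro n hn
  rw [mul_sum]
  -- `Icc 2 n` is definitionally `Ioc 1 n`.
  refine prod_Ioc_mul_add_sum_lt_of_eq_mul_add (x := fun k => a (k + 1)) hK3 hrec
    (fun k hk => ?_) hn
  calc (∏ i ∈ Ioc 1 k, K3 i) * ((a 2 - K3 1 * a 1) *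
        ∏ i ∈ Icc 2 (k + 1), (((i : ℝ) - 1 + K1 (i - 1) + K2 (i - 1)) / K3 (i - 1)))
      = K2 0 * (K3 1 * (∏ i ∈ Ioc 1 k, K3 i) *
        ∏ i ∈ Icc 2 (k + 1), (((i : ℝ) - 1 + K1 (i - 1) + K2 (i - 1)) / K3 (i - 1))) := by
        rw [hd]; ring
    _ = K2 0 * ∏ j ∈ Icc 1 k, growthFactor K1 K2 j := by
        rw [mul_prod_mul_prod_div_eq_prod_growthFactor (fun n => (hK3 n).ne') hk]
    _ < auxTail K1 K2 a k := mul_prod_growthFactor_lt_auxTail hK1' hK2 (fun i => (hpos i).1) hk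
end

section
/- Let α, β, μ be positive reals with α + β > 2, take constant rate functions K1(n) = α, K2(n) = β, K3(n) = μ for all n, and let (a_n) be the paper's auxiliary sequence a associated with these constant rates; thus a_1 = μ and a_n = μ·a_{n−1} + μ·β·Σ_{i=1}^{n−2} a_i·∏_{j=i+1}^{n−2}(j + α + β) + μ·β·∏_{i=1}^{n−2}(i + α + β) for n ≥ 2. Then a_n/n! → ∞ as n → ∞. -/
/-!
Dropping the nonnegative terms of the recursion leaves `a n ≥ μ β ∏_{i=1}^{n-2} (i + α + β)`.
Since `n! = 2 ∏_{i=1}^{n-2} (i + 2)`, dividing by `n!` gives `(μ β / 2) ∏ (1 + c / (i + 2))` with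
`c = α + β - 2 > 0`, and this product is at least `1 + c ∑ 1 / (i + 2)`, which diverges with the
harmonic series.
-/

open Finset Filter Nat

theorem Finset.one_add_sum_le_prod_one_add {ι R : Type*} [CommSemiring R] [PartialOrder R]
    [IsOrderedRing R] (s : Finset ι) {f : ι → R} (hf : ∀ i ∈ s, 0 ≤ f i) :
    1 + ∑ i ∈ s, f i ≤ ∏ i ∈ s, (1 + f i) := by
  classical
  induction s using Finset.induction_on with
  | empty => simp
  | insert x s hx ih =>
    rw [sum_insert hx, prod_insert hx]
    have hfx : 0 ≤ f x := hf x (mem_insert_self x s)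
    have hsum : 0 ≤ ∑ i ∈ s, f i := sum_nonneg fun i hi => hf i (mem_insert_of_mem hi)
    calc 1 + (f x + ∑ i ∈ s, f i) ≤ 1 + (f x + ∑ i ∈ s, f i) + f x * ∑ i ∈ s, f i :=
          le_add_of_nonneg_right (mul_nonneg hfx hsum)
      _ = (1 + f x) * (1 + ∑ i ∈ s, f i) := by ring
      _ ≤ (1 + f x) * ∏ i ∈ s, (1 + f i) :=
          mul_le_mul_of_nonneg_left (ih fun i hi => hf i (mem_insert_of_mem hi))
            (add_nonneg zero_le_one hfx)

theorem prod_Icc_one_natCast_add_two (m : ℕ) :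
    2 * ∏ i ∈ Icc 1 m, ((i : ℝ) + 2) = (m + 2)! := by
  induction m with
  | zero => simp
  | succ m ih =>
    rw [prod_Icc_succ_top (by omega), ← mul_assoc, ih, Nat.factorial_succ (m + 2)]
    push_cast
    ring

theorem tendsto_sum_Icc_one_div_natCast_add_two_atTop :
    Tendsto (fun m : ℕ => ∑ i ∈ Icc 1 m, 1 / ((i : ℝ) + 2)) atTop atTop := by
  have hshift (m : ℕ) :
      ∑ i ∈ Icc 1 m, 1 / ((i : ℝ) + 2) = ∑ k ∈ range m, 1 / ((k + 3 : ℕ) : ℝ) := by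
    rw [← Finset.Ico_add_one_right_eq_Icc, sum_Ico_eq_sum_range]
    refine sum_congr rfl fun k _ => ?_
    push_cast
    ring_nf
  simp_rw [hshift]
  refine (not_summable_iff_tendsto_nat_atTop_of_nonneg fun k => by positivity).mp ?_
  exact (summable_nat_add_iff 3).not.mpr Real.not_summable_one_div_natCast

theorem tendsto_prod_Icc_one_natCast_add_div_factorial_atTop {s : ℝ} (hs : 2 < s) :
    Tendsto (fun m : ℕ => (∏ i ∈ Icc 1 m, ((i : ℝ) + s)) / (m + 2)!) atTop atTop := by
  set c := s - 2
  have hc : 0 < c := sub_pos.mpr hs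
  have hfactor (m : ℕ) : (∏ i ∈ Icc 1 m, ((i : ℝ) + s)) / (m + 2)! =
      (∏ i ∈ Icc 1 m, (1 + c / ((i : ℝ) + 2))) / 2 := by
    have hsplit : ∀ i : ℕ, (i : ℝ) + s = ((i : ℝ) + 2) * (1 + c / ((i : ℝ) + 2)) := by
      intro i
      field_simp
      ring
    rw [prod_congr rfl fun i _ => hsplit i, prod_mul_distrib, ← prod_Icc_one_natCast_add_two]
    field_simp
  have hlower (m : ℕ) : (1 + c * ∑ i ∈ Icc 1 m, 1 / ((i : ℝ) + 2)) / 2 ≤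
      (∏ i ∈ Icc 1 m, ((i : ℝ) + s)) / (m + 2)! := by
    rw [hfactor, mul_sum]
    gcongr
    simpa only [mul_one_div] using one_add_sum_le_prod_one_add _ fun i _ => by positivity
  refine tendsto_atTop_mono hlower ?_
  refine Tendsto.atTop_div_const two_pos (tendsto_atTop_add_const_left _ 1 ?_)
  exact tendsto_sum_Icc_one_div_natCast_add_two_atTop.const_mul_atTop hc

theorem prod_natCast_add_add_nonneg {α β : ℝ} (hαβ : 0 ≤ α + β) (s : Finset ℕ) :
    0 ≤ ∏ j ∈ s, ((j : ℝ) + α + β) :=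
  prod_nonneg fun j _ => by rw [add_assoc]; positivity

def IsAuxSeq (α β μ : ℝ) (a : ℕ → ℝ) : Prop :=
  a 1 = μ ∧ ∀ n : ℕ, 2 ≤ n →
    a n = μ * a (n - 1)
      + μ * β * ∑ i ∈ Icc 1 (n - 2), a i * ∏ j ∈ Icc (i + 1) (n - 2), ((j : ℝ) + α + β)
      + μ * β * ∏ i ∈ Icc 1 (n - 2), ((i : ℝ) + α + β)

namespace IsAuxSeq

variable {α β μ : ℝ} {a : ℕ → ℝ}

theorem mul_prod_le_of_nonneg (ha : IsAuxSeq α β μ a) (hμ : 0 ≤ μ) (hβ : 0 ≤ β)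
    (hαβ : 0 ≤ α + β) {n : ℕ} (hn : 2 ≤ n) (hprev : ∀ i, 1 ≤ i → i < n → 0 ≤ a i) :
    μ * β * ∏ i ∈ Icc 1 (n - 2), ((i : ℝ) + α + β) ≤ a n := by
  rw [ha.2 n hn]
  have hlast : 0 ≤ μ * a (n - 1) := mul_nonneg hμ (hprev _ (by omega) (by omega))
  have hsum : 0 ≤ μ * β *
      ∑ i ∈ Icc 1 (n - 2), a i * ∏ j ∈ Icc (i + 1) (n - 2), ((j : ℝ) + α + β) :=
    mul_nonneg (mul_nonneg hμ hβ) <| sum_nonneg fun i hi => by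
      have hi := mem_Icc.mp hi
      exact mul_nonneg (hprev i hi.1 (by omega)) (prod_natCast_add_add_nonneg hαβ _)
  linarith

theorem nonneg (ha : IsAuxSeq α β μ a) (hμ : 0 ≤ μ) (hβ : 0 ≤ β) (hαβ : 0 ≤ α + β) :
    ∀ n, 1 ≤ n → 0 ≤ a n := by
  intro n
  induction n using Nat.strong_induction_on with
  | _ n ih =>
    intro hn
    obtain rfl | hn := hn.eq_or_lt
    · exact ha.1 ▸ hμ
    · exact (mul_nonneg (mul_nonneg hμ hβ) (prod_natCast_add_add_nonneg hαβ _)).trans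
        (ha.mul_prod_le_of_nonneg hμ hβ hαβ hn fun i hi hin => ih i hin hi)

theorem mul_prod_le (ha : IsAuxSeq α β μ a) (hμ : 0 ≤ μ) (hβ : 0 ≤ β) (hαβ : 0 ≤ α + β)
    {n : ℕ} (hn : 2 ≤ n) : μ * β * ∏ i ∈ Icc 1 (n - 2), ((i : ℝ) + α + β) ≤ a n :=
  ha.mul_prod_le_of_nonneg hμ hβ hαβ hn fun i hi _ => ha.nonneg hμ hβ hαβ i hi

end IsAuxSeq

theorem aux_a_div_factorial_tendsto_atTop_general (α β μ : ℝ)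
    (hβ : 0 < β) (hμ : 0 < μ) (hαβ : 2 < α + β)
    (a : ℕ → ℝ)
    (ha1 : a 1 = μ)
    (haRec : ∀ n : ℕ, 2 ≤ n →
      a n = μ * a (n - 1)
        + μ * β * ∑ i ∈ Finset.Icc 1 (n - 2), a i *
            ∏ j ∈ Finset.Icc (i + 1) (n - 2), ((j : ℝ) + α + β)
        + μ * β * ∏ i ∈ Finset.Icc 1 (n - 2), ((i : ℝ) + α + β)) :
    Filter.Tendsto (fun n : ℕ => a n / (n.factorial : ℝ)) Filter.atTop Filter.atTop := by
  have ha : IsAuxSeq α β μ a := ⟨ha1, haRec⟩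
  have hratio := (tendsto_prod_Icc_one_natCast_add_div_factorial_atTop hαβ).const_mul_atTop
    (mul_pos hμ hβ) |>.comp (tendsto_sub_atTop_nat 2)
  refine tendsto_atTop_mono' atTop ?_ hratio
  filter_upwards [eventually_ge_atTop 2] with n hn
  have hprod := ha.mul_prod_le hμ.le hβ.le (by linarith) hn
  simp only [Function.comp_apply, Nat.sub_add_cancel hn, ← add_assoc]
  rw [mul_div_assoc']
  exact div_le_div_of_nonneg_right hprod (by positivity)

/-- For constant normalized rates `α, β, μ > 0` with `α + β > 2`, the paper's auxiliary
sequence `a` satisfies `a_n / n! → ∞` as `n → ∞`. -/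
theorem aux_a_div_factorial_tendsto_atTop (α β μ : ℝ)
    (hα : 0 < α) (hβ : 0 < β) (hμ : 0 < μ) (hαβ : 2 < α + β)
    (a : ℕ → ℝ)
    (ha1 : a 1 = μ)
    (haRec : ∀ n : ℕ, 2 ≤ n →
      a n = μ * a (n - 1)
        + μ * β * ∑ i ∈ Finset.Icc 1 (n - 2), a i *
            ∏ j ∈ Finset.Icc (i + 1) (n - 2), ((j : ℝ) + α + β)
        + μ * β * ∏ i ∈ Finset.Icc 1 (n - 2), ((i : ℝ) + α + β)) :
    Filter.Tendsto (fun n : ℕ => a n / (n.factorial : ℝ)) Filter.atTop Filter.atTop :=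
  aux_a_div_factorial_tendsto_atTop_general α β μ hβ hμ hαβ a ha1 haRec
end

section
/- Let α, β, μ be positive reals. Define P(0) = ₁F₁(α, α + β; −μ), P0(0) = [β/(α + β)]·₁F₁(α, α + β + 1; −μ), γ = [β/(α + β)]·P(0) − P0(0), and define the sequence (y_n)_{n≥1} by y_1 = μ·(P(0) − P0(0)) and, for n ≥ 2, y_n = μ·y_{n−1} + μ·β·Σ_{i=1}^{n−2} y_i·∏_{j=i+1}^{n−2}(j + α + β) + μ·(α + β)_{n−1}·γ. Then for every n ≥ 1, y_n = μ^n · (α)_n/(α + β)_n · ₁F₁(α + n, α + β + n; −μ). -/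
open Finset

/-- The ascending Pochhammer symbol `(x)_n = x(x+1)⋯(x+n−1)`. -/
noncomputable def poch (x : ℝ) (n : ℕ) : ℝ := ∏ i ∈ Finset.range n, (x + (i : ℝ))

/-- The confluent hypergeometric series `₁F₁(a, b; z) = Σ_{n=0}^∞ (a)_n/(b)_n · zⁿ/n!`. -/
noncomputable def F11 (a b z : ℝ) : ℝ := ∑' n : ℕ, poch a n / poch b n * z ^ n / (n.factorial : ℝ)

lemma poch_zero (x : ℝ) : poch x 0 = 1 := Finset.prod_range_zero _
lemma poch_succ (x : ℝ) (n : ℕ) : poch x (n+1) = poch x n * (x + n) := Finset.prod_range_succ _ _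
lemma poch_succ' (x : ℝ) (n : ℕ) : poch x (n+1) = x * poch (x+1) n := by
  rw [poch, Finset.prod_range_succ']
  simp only [Nat.cast_zero, add_zero]
  rw [mul_comm, poch]
  congr 1
  apply Finset.prod_congr rfl
  intro i _
  push_cast
  ring
lemma poch_pos {x : ℝ} (hx : 0 < x) (n : ℕ) : 0 < poch x n :=
  Finset.prod_pos fun i _ => by positivity
lemma poch_le {x y : ℝ} (hx : 0 < x) (hxy : x ≤ y) (n : ℕ) : poch x n ≤ poch y n :=
  Finset.prod_le_prod (fun i _ => by positivity) (fun i _ => by linarith)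

lemma F11_summable {a b : ℝ} (ha : 0 < a) (hab : a ≤ b) (z : ℝ) :
    Summable (fun n : ℕ => poch a n / poch b n * z ^ n / (n.factorial : ℝ)) := by
  apply Summable.of_abs
  apply Summable.of_nonneg_of_le (fun n => abs_nonneg _) _ (Real.summable_pow_div_factorial |z|)
  intro n
  have h1 := poch_pos ha n
  have h2 := poch_pos (lt_of_lt_of_le ha hab) n
  have h3 := poch_le ha hab n
  rw [abs_div, abs_mul, abs_div, abs_pow]
  rw [abs_of_pos h1, abs_of_pos h2, Nat.abs_cast]
  have hfac : (0:ℝ) < n.factorial := by positivity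
  have hq : poch a n / poch b n ≤ 1 := (div_le_one h2).2 h3
  have hz : (0:ℝ) ≤ |z|^n := by positivity
  calc poch a n / poch b n * |z| ^ n / ↑n.factorial
      ≤ 1 * |z|^n / n.factorial := by gcongr
    _ = |z|^n / n.factorial := by rw [one_mul]


/-- term of the series -/
noncomputable def T (a b z : ℝ) (n : ℕ) : ℝ := poch a n / poch b n * z ^ n / (n.factorial : ℝ)

lemma F11_eq (a b z : ℝ) : F11 a b z = ∑' n, T a b z n := rfl

/-- shifted term -/
noncomputable def G (a b z : ℝ) (n : ℕ) : ℝ :=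
  (n : ℝ) * (poch a (n-1) / poch b (n-1) * z ^ n / (n.factorial : ℝ))

lemma G_zero (a b z : ℝ) : G a b z 0 = 0 := by simp [G]

lemma G_succ (a b z : ℝ) (n : ℕ) : G a b z (n+1) = z * T a b z n := by
  simp only [G, T, Nat.add_sub_cancel, Nat.factorial_succ]
  have h : ((n:ℝ)+1) ≠ 0 := by positivity
  have h2 : (n.factorial : ℝ) ≠ 0 := by positivity
  generalize poch a n / poch b n = C
  push_cast
  field_simp
  ring

lemma G_summable {a b : ℝ} (ha : 0 < a) (hab : a ≤ b) (z : ℝ) : Summable (G a b z) := by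
  have h : Summable (fun n => G a b z (n+1)) := by
    simp only [G_succ]
    exact (F11_summable ha hab z).mul_left z
  exact (summable_nat_add_iff 1).mp h

lemma zmul_F11 {a b : ℝ} (ha : 0 < a) (hab : a ≤ b) (z : ℝ) :
    z * F11 a b z = ∑' n, G a b z n := by
  rw [Summable.tsum_eq_zero_add (G_summable ha hab z), G_zero, zero_add]
  simp only [G_succ]
  rw [tsum_mul_left]
  rfl

lemma poch_shift {x : ℝ} (hx : 0 < x) (n : ℕ) :
    poch (x+1) n = poch x n * (x + n) / x := by
  have h1 : poch x (n+1) = poch x n * (x+n) := poch_succ x n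
  have h2 : poch x (n+1) = x * poch (x+1) n := poch_succ' x n
  have hx0 : x ≠ 0 := ne_of_gt hx
  field_simp
  rw [← h1]; linarith [h2]

lemma T_contig1 {a b z : ℝ} (ha : 0 < a) (hb : 0 < b) (n : ℕ) :
    T a b z n - (b-a)/b * T a (b+1) z n = a/b * T (a+1) (b+1) z n := by
  simp only [T]
  rw [poch_shift hb n, poch_shift ha n]
  have h1 : poch b n ≠ 0 := ne_of_gt (poch_pos hb n)
  have h2 : poch a n ≠ 0 := ne_of_gt (poch_pos ha n)
  have h3 : b + (n:ℝ) ≠ 0 := by positivity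
  have h4 : (n.factorial : ℝ) ≠ 0 := by positivity
  field_simp
  ring

lemma contig1 {a b z : ℝ} (ha : 0 < a) (hab : a ≤ b) :
    F11 a b z - (b-a)/b * F11 a (b+1) z = a/b * F11 (a+1) (b+1) z := by
  have hb : 0 < b := lt_of_lt_of_le ha hab
  have s1 : Summable (T a b z) := F11_summable ha hab z
  have s2 : Summable (T a (b+1) z) := F11_summable ha (by linarith) z
  rw [F11_eq, F11_eq, F11_eq, ← tsum_mul_left, ← tsum_mul_left,
    ← Summable.tsum_sub s1 (s2.mul_left _)]
  exact tsum_congr fun n => T_contig1 ha hb n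

lemma T_zero (a b z : ℝ) : T a b z 0 = 1 := by simp [T, poch_zero]

lemma fact_succ_cast (n : ℕ) : ((n+1).factorial : ℝ) = ((n:ℝ)+1) * n.factorial := by
  rw [Nat.factorial_succ]; push_cast; ring

lemma T_contig3 {a b z : ℝ} (ha : 0 < a) (hb : 0 < b) (n : ℕ) :
    -((a+1)/(b+1)) * G (a+2) (b+2) z n
      = b * T (a+1) (b+1) z n - G (a+1) (b+1) z n - b * T a b z n := by
  cases n with
  | zero => simp [G_zero, T_zero]
  | succ n =>
    rw [G_succ, G_succ]
    have e1 : poch (a+2) n = poch (a+1) n * (a+1+n) / (a+1) := by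
      have := poch_shift (x := a+1) (by linarith) n
      rw [show a+(2:ℝ) = a+1+1 by ring, this]
    have e2 : poch (b+2) n = poch (b+1) n * (b+1+n) / (b+1) := by
      have := poch_shift (x := b+1) (by linarith) n
      rw [show b+(2:ℝ) = b+1+1 by ring, this]
    have e3 : poch (a+1) (n+1) = poch (a+1) n * (a+1+n) := by
      rw [poch_succ]
    have e4 : poch (b+1) (n+1) = poch (b+1) n * (b+1+n) := by
      rw [poch_succ]
    have e5 : poch a (n+1) = a * poch (a+1) n := poch_succ' a n
    have e6 : poch b (n+1) = b * poch (b+1) n := poch_succ' b n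
    simp only [T, e1, e2, e3, e4, e5, e6, fact_succ_cast, pow_succ]
    have h1 : poch (a+1) n ≠ 0 := ne_of_gt (poch_pos (by linarith) n)
    have h2 : poch (b+1) n ≠ 0 := ne_of_gt (poch_pos (by linarith) n)
    have h3 : (a:ℝ) + 1 ≠ 0 := by positivity
    have h4 : (b:ℝ) + 1 ≠ 0 := by positivity
    have h5 : b + 1 + (n:ℝ) ≠ 0 := by positivity
    have h6 : (n.factorial : ℝ) ≠ 0 := by positivity
    have h7 : (n:ℝ) + 1 ≠ 0 := by positivity
    have h8 : b ≠ 0 := ne_of_gt hb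
    field_simp
    ring

lemma contig3 {a b z : ℝ} (ha : 0 < a) (hab : a ≤ b) :
    -z * ((a+1)/(b+1)) * F11 (a+2) (b+2) z
      = (b - z) * F11 (a+1) (b+1) z - b * F11 a b z := by
  have hb : 0 < b := lt_of_lt_of_le ha hab
  have ha1 : (0:ℝ) < a + 1 := by linarith
  have ha2 : (0:ℝ) < a + 2 := by linarith
  have s0 : Summable (T a b z) := F11_summable ha hab z
  have s1 : Summable (T (a+1) (b+1) z) := F11_summable ha1 (by linarith) z
  have g1 : Summable (G (a+1) (b+1) z) := G_summable ha1 (by linarith) z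
  have g2 : Summable (G (a+2) (b+2) z) := G_summable ha2 (by linarith) z
  have lhs : -z * ((a+1)/(b+1)) * F11 (a+2) (b+2) z
      = ∑' n, -((a+1)/(b+1)) * G (a+2) (b+2) z n := by
    rw [tsum_mul_left]
    have := zmul_F11 ha2 (show a+2 ≤ b+2 by linarith) z
    rw [show -z * ((a+1)/(b+1)) * F11 (a+2) (b+2) z
        = -((a+1)/(b+1)) * (z * F11 (a+2) (b+2) z) by ring, this]
  have rhs : (b - z) * F11 (a+1) (b+1) z - b * F11 a b z
      = ∑' n, (b * T (a+1) (b+1) z n - G (a+1) (b+1) z n - b * T a b z n) := by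
    rw [Summable.tsum_sub (((s1.mul_left b).sub g1)) (s0.mul_left b),
      Summable.tsum_sub (s1.mul_left b) g1, tsum_mul_left, tsum_mul_left,
      ← zmul_F11 ha1 (show a+1 ≤ b+1 by linarith) z, ← F11_eq, ← F11_eq]
    ring
  rw [lhs, rhs]
  exact tsum_congr fun n => T_contig3 ha hb n

lemma T_contig2 {a b z : ℝ} (ha : 0 < a) (hb : 0 < b) (n : ℕ) :
    -(a*(a+1)/(b*(b+1))) * G (a+2) (b+2) z n
      = -(a/b) * G (a+1) (b+1) z n + (b-a) * (T a b z n - T a (b+1) z n) := by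
  cases n with
  | zero => simp [G_zero, T_zero]
  | succ n =>
    rw [G_succ, G_succ]
    have e1 : poch (a+2) n = poch (a+1) n * (a+1+n) / (a+1) := by
      have := poch_shift (x := a+1) (by linarith) n
      rw [show a+(2:ℝ) = a+1+1 by ring, this]
    have e2 : poch (b+2) n = poch (b+1) n * (b+1+n) / (b+1) := by
      have := poch_shift (x := b+1) (by linarith) n
      rw [show b+(2:ℝ) = b+1+1 by ring, this]
    have e4 : poch (b+1) (n+1) = poch (b+1) n * (b+1+n) := by
      rw [poch_succ]
    have e5 : poch a (n+1) = a * poch (a+1) n := poch_succ' a n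
    have e6 : poch b (n+1) = b * poch (b+1) n := poch_succ' b n
    simp only [T, e1, e2, e4, e5, e6, fact_succ_cast, pow_succ]
    have h1 : poch (a+1) n ≠ 0 := ne_of_gt (poch_pos (by linarith) n)
    have h2 : poch (b+1) n ≠ 0 := ne_of_gt (poch_pos (by linarith) n)
    have h3 : (a:ℝ) + 1 ≠ 0 := by positivity
    have h4 : (b:ℝ) + 1 ≠ 0 := by positivity
    have h5 : b + 1 + (n:ℝ) ≠ 0 := by positivity
    have h6 : (n.factorial : ℝ) ≠ 0 := by positivity
    have h7 : (n:ℝ) + 1 ≠ 0 := by positivity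
    have h8 : b ≠ 0 := ne_of_gt hb
    have h9 : a ≠ 0 := ne_of_gt ha
    field_simp
    ring

lemma contig2 {a b z : ℝ} (ha : 0 < a) (hab : a ≤ b) :
    -z * (a*(a+1)/(b*(b+1))) * F11 (a+2) (b+2) z
      = -z * (a/b) * F11 (a+1) (b+1) z + (b-a) * (F11 a b z - F11 a (b+1) z) := by
  have hb : 0 < b := lt_of_lt_of_le ha hab
  have ha1 : (0:ℝ) < a + 1 := by linarith
  have ha2 : (0:ℝ) < a + 2 := by linarith
  have s0 : Summable (T a b z) := F11_summable ha hab z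
  have s0' : Summable (T a (b+1) z) := F11_summable ha (by linarith) z
  have g1 : Summable (G (a+1) (b+1) z) := G_summable ha1 (by linarith) z
  have lhs : -z * (a*(a+1)/(b*(b+1))) * F11 (a+2) (b+2) z
      = ∑' n, -(a*(a+1)/(b*(b+1))) * G (a+2) (b+2) z n := by
    rw [tsum_mul_left]
    have := zmul_F11 ha2 (show a+2 ≤ b+2 by linarith) z
    rw [show -z * (a*(a+1)/(b*(b+1))) * F11 (a+2) (b+2) z
        = -(a*(a+1)/(b*(b+1))) * (z * F11 (a+2) (b+2) z) by ring, this]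
  have rhs : -z * (a/b) * F11 (a+1) (b+1) z + (b-a) * (F11 a b z - F11 a (b+1) z)
      = ∑' n, (-(a/b) * G (a+1) (b+1) z n + (b-a) * (T a b z n - T a (b+1) z n)) := by
    rw [Summable.tsum_add ((g1.mul_left _)) ((s0.sub s0').mul_left _),
      tsum_mul_left, tsum_mul_left, Summable.tsum_sub s0 s0',
      ← zmul_F11 ha1 (show a+1 ≤ b+1 by linarith) z, ← F11_eq, ← F11_eq]
    ring
  rw [lhs, rhs]
  exact tsum_congr fun n => T_contig2 ha hb n

lemma z_rec_core (α β μ : ℝ) (k : ℕ) (hα : 0 < α) (hβ : 0 < β) (hμ : 0 < μ)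
    (M1 M2 M3 : ℝ)
    (h1 : M1 = F11 (α+(k:ℝ)+1) (α+β+(k:ℝ)+1) (-μ))
    (h2 : M2 = F11 (α+(k:ℝ)+2) (α+β+(k:ℝ)+2) (-μ))
    (h3 : M3 = F11 (α+(k:ℝ)+3) (α+β+(k:ℝ)+3) (-μ)) :
    μ^(k+3) * poch α (k+3) / poch (α+β) (k+3) * M3
      = (μ + (α+β+(k:ℝ)+1)) * (μ^(k+2) * poch α (k+2) / poch (α+β) (k+2) * M2)
        - μ*(α+(k:ℝ)+1) * (μ^(k+1) * poch α (k+1) / poch (α+β) (k+1) * M1) := by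
  set a : ℝ := α+(k:ℝ)+1 with ha_def
  set b : ℝ := α+β+(k:ℝ)+1 with hb_def
  have hapos : 0 < a := by rw [ha_def]; positivity
  have hab : a ≤ b := by rw [ha_def, hb_def]; linarith
  have hbpos : 0 < b := lt_of_lt_of_le hapos hab
  rw [show α+(k:ℝ)+2 = a+1 by rw [ha_def]; ring,
      show α+β+(k:ℝ)+2 = b+1 by rw [hb_def]; ring] at h2
  rw [show α+(k:ℝ)+3 = a+2 by rw [ha_def]; ring,
      show α+β+(k:ℝ)+3 = b+2 by rw [hb_def]; ring] at h3
  have key : μ * ((a+1)/(b+1)) * M3 = (b+μ)*M2 - b*M1 := by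
    rw [h1, h2, h3]
    linear_combination contig3 (z := -μ) hapos hab
  have hmu : μ ≠ 0 := ne_of_gt hμ
  have ha1 : a + 1 ≠ 0 := by positivity
  have hb1 : b + 1 ≠ 0 := by positivity
  have hM3 : M3 = (b+1)/(μ*(a+1)) * ((b+μ)*M2 - b*M1) := by
    rw [← key]; field_simp
  have p1 : poch α (k+2) = poch α (k+1) * a := by
    rw [show k+2 = (k+1)+1 from rfl, poch_succ, ha_def]; push_cast; ring
  have p2 : poch α (k+3) = poch α (k+1) * a * (a+1) := by
    rw [show k+3 = (k+2)+1 from rfl, poch_succ, p1, ha_def]; push_cast; ring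
  have q1 : poch (α+β) (k+2) = poch (α+β) (k+1) * b := by
    rw [show k+2 = (k+1)+1 from rfl, poch_succ, hb_def]; push_cast; ring
  have q2 : poch (α+β) (k+3) = poch (α+β) (k+1) * b * (b+1) := by
    rw [show k+3 = (k+2)+1 from rfl, poch_succ, q1, hb_def]; push_cast; ring
  rw [hM3, p1, p2, q1, q2]
  have hA : poch α (k+1) ≠ 0 := ne_of_gt (poch_pos hα _)
  have hB : poch (α+β) (k+1) ≠ 0 := ne_of_gt (poch_pos (by positivity) _)
  have hbne : b ≠ 0 := ne_of_gt hbpos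
  field_simp
  ring

/-- Formula (19) of the paper: the solution of the reduced iterative system (18) for
the common ON-OFF model is `y_n = μⁿ·(α)_n/(α+β)_n·₁F₁(α+n, α+β+n; −μ)`. -/
theorem y_seq_eq_hypergeometric (α β μ : ℝ)
    (hα : 0 < α) (hβ : 0 < β) (hμ : 0 < μ)
    (P Pz γ : ℝ) (y : ℕ → ℝ)
    (hP : P = F11 α (α + β) (-μ))
    (hPz : Pz = (β / (α + β)) * F11 α (α + β + 1) (-μ))
    (hγ : γ = (β / (α + β)) * P - Pz)
    (hy1 : y 1 = μ * (P - Pz))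
    (hyRec : ∀ n : ℕ, 2 ≤ n →
      y n = μ * y (n - 1)
        + μ * β * ∑ i ∈ Finset.Icc 1 (n - 2), y i *
            ∏ j ∈ Finset.Icc (i + 1) (n - 2), ((j : ℝ) + α + β)
        + μ * poch (α + β) (n - 1) * γ) :
    ∀ n : ℕ, 1 ≤ n →
      y n = μ ^ n * poch α n / poch (α + β) n * F11 (α + n) (α + β + n) (-μ) := by
  have hc : (0:ℝ) < α + β := by linarith
  have hcne : (α + β : ℝ) ≠ 0 := ne_of_gt hc
  set Z : ℕ → ℝ := fun m =>
    μ ^ m * poch α m / poch (α + β) m * F11 (α + m) (α + β + m) (-μ) with hZ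
  -- base case n = 1
  have poch_one : ∀ x : ℝ, poch x 1 = x := by
    intro x; rw [show (1:ℕ) = 0+1 from rfl, poch_succ, poch_zero]; norm_num
  have base1 : y 1 = Z 1 := by
    have key1 : F11 α (α+β) (-μ) - β/(α+β) * F11 α (α+β+1) (-μ)
        = α/(α+β) * F11 (α+1) (α+β+1) (-μ) := by
      linear_combination contig1 (z := -μ) hα (show α ≤ α + β by linarith)
    rw [hy1, hP, hPz, hZ]
    simp only [poch_one]
    push_cast
    linear_combination μ * key1
  -- base case n = 2
  have poch_two : ∀ x : ℝ, poch x 2 = x * (x+1) := by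
    intro x; rw [show (2:ℕ) = 1+1 from rfl, poch_succ, poch_one]; norm_num
  have base2 : y 2 = Z 2 := by
    have h2 := hyRec 2 (by norm_num)
    norm_num at h2
    have hγ' : (α+β) * γ = β * (F11 α (α+β) (-μ) - F11 α (α+β+1) (-μ)) := by
      rw [hγ, hP, hPz]; field_simp
    have key2 := contig2 (z := -μ) hα (show α ≤ α + β by linarith)
    have key1 : y 1 = μ * (α/(α+β)) * F11 (α+1) (α+β+1) (-μ) := by
      rw [hy1, hP, hPz]
      linear_combination μ * contig1 (z := -μ) hα (show α ≤ α + β by linarith)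
    rw [hZ]
    simp only [poch_two, poch_one] at h2 ⊢
    push_cast
    linear_combination h2 + μ * key1 + μ * hγ' - μ * key2
  -- the three-term recurrence satisfied by y
  have yrec3 : ∀ k : ℕ, y (k+3)
      = (μ + (α+β+(k:ℝ)+1)) * y (k+2) - μ*(α+(k:ℝ)+1) * y (k+1) := by
    intro k
    have h1 := hyRec (k+3) (by omega)
    have h2 := hyRec (k+2) (by omega)
    rw [show k+3-1 = k+2 by omega, show k+3-2 = k+1 by omega] at h1
    rw [show k+2-1 = k+1 by omega, show k+2-2 = k by omega] at h2
    have hsplit : (∑ i ∈ Finset.Icc 1 (k+1), y i *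
          ∏ j ∈ Finset.Icc (i + 1) (k+1), ((j : ℝ) + α + β))
        = (∑ i ∈ Finset.Icc 1 k, y i *
          ∏ j ∈ Finset.Icc (i + 1) k, ((j : ℝ) + α + β)) * (((k:ℝ)+1) + α + β)
          + y (k+1) := by
      rw [Finset.sum_Icc_succ_top (by omega : 1 ≤ k+1)]
      rw [show Finset.Icc (k+1+1) (k+1) = (∅ : Finset ℕ) by
        apply Finset.Icc_eq_empty; omega, Finset.prod_empty, mul_one]
      congr 1
      rw [Finset.sum_mul]
      apply Finset.sum_congr rfl
      intro i hi
      have hik : i + 1 ≤ k + 1 := by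
        rcases Finset.mem_Icc.mp hi with ⟨_, h⟩; omega
      rw [Finset.prod_Icc_succ_top hik]
      push_cast
      ring
    rw [hsplit] at h1
    have hpoch : poch (α+β) (k+2) = poch (α+β) (k+1) * ((α+β) + ((k:ℝ)+1)) := by
      rw [show k+2 = (k+1)+1 from rfl, poch_succ]; push_cast; ring
    rw [hpoch] at h1
    linear_combination h1 - ((k:ℝ)+1+α+β) * h2
  -- the same recurrence for Z
  have zrec3 : ∀ k : ℕ, Z (k+3)
      = (μ + (α+β+(k:ℝ)+1)) * Z (k+2) - μ*(α+(k:ℝ)+1) * Z (k+1) := by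
    intro k
    simp only [hZ]
    have := z_rec_core α β μ k hα hβ hμ
      (F11 (α+(k:ℝ)+1) (α+β+(k:ℝ)+1) (-μ))
      (F11 (α+(k:ℝ)+2) (α+β+(k:ℝ)+2) (-μ))
      (F11 (α+(k:ℝ)+3) (α+β+(k:ℝ)+3) (-μ)) rfl rfl rfl
    push_cast
    convert this using 3 <;> push_cast <;> ring
  -- two-step induction
  have H : ∀ k : ℕ, y (k+1) = Z (k+1) ∧ y (k+2) = Z (k+2) := by
    intro k
    induction k with
    | zero => exact ⟨base1, base2⟩
    | succ k ih =>
      refine ⟨ih.2, ?_⟩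
      rw [show k+1+2 = k+3 from rfl, yrec3 k, zrec3 k, ih.1, ih.2]
  intro n hn
  obtain ⟨k, rfl⟩ : ∃ k, n = k + 1 := ⟨n - 1, by omega⟩
  exact (H k).1
end
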